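/- arXiv:1703.05391 — 6 statements merged into one kernel-verified Lean document; each statement's English description precedes it below -/
import Mathlib

section
/- There exist three symmetric open subsets of S¹×S¹ which cover S¹×S¹ and each of which admits a symmetric motion planning rule. -/
/-!
A continuous angle function `θ` on `V` with `x · exp (i θ(x, y)) = y` and `θ(y, x) = -θ(x, y)`
gives the symmetric rule `t ↦ x · exp (i t θ(x, y))`. On non-antipodal pairs take
`θ = arg (y / x)`, the short geodesic. On pairs with `f x ≠ f y` for a continuous `f`, the
quotient `y / x` avoids `1`, so `arg (-(y / x))` is continuous and odd; adding `±π`, with the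
sign of `f x - f y`, turns it into an odd lift. Pairs that are neither antipodal nor separated
by the real or imaginary part do not exist, since `x ≠ -x`.
-/

open unitInterval

/-- A subset of `S¹ × S¹` is symmetric if `(x, y) ∈ V` implies `(y, x) ∈ V`. -/
def IsSymmetricSet (V : Set (Circle × Circle)) : Prop :=
  ∀ x y : Circle, (x, y) ∈ V → (y, x) ∈ V

/-- `s` is a symmetric motion planning rule on `V ⊆ S¹ × S¹`: a continuous map from `V`
to the path space `C(I, S¹) = PS¹` (carrying the compact-open topology), sending each
`(x, y) ∈ V` to a path from `x` to `y`, such that `s (y, x)` is the time-reversal of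
`s (x, y)`. -/
def IsSymmetricMPR (V : Set (Circle × Circle)) (s : V → C(unitInterval, Circle)) : Prop :=
  Continuous s ∧
  (∀ p : V, s p 0 = p.1.1 ∧ s p 1 = p.1.2) ∧
  (∀ (x y : Circle) (hxy : (x, y) ∈ V) (hyx : (y, x) ∈ V) (t : unitInterval),
    s ⟨(y, x), hyx⟩ t = s ⟨(x, y), hxy⟩ (σ t))

open Complex

namespace Circle

lemma exp_pi : exp Real.pi = -1 :=
  Circle.ext (by simp [coe_exp, Complex.exp_pi_mul_I])

lemma exp_pi_mul_div_abs {d : ℝ} (hd : d ≠ 0) : exp (Real.pi * (d / |d|)) = -1 := by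
  rcases abs_choice d with h | h <;> rw [h]
  · rw [div_self hd, mul_one, exp_pi]
  · rw [div_neg, div_self hd, mul_neg_one, exp_neg, exp_pi, inv_neg, inv_one]

lemma arg_ne_pi {w : Circle} (hw : w ≠ -1) : arg w ≠ Real.pi :=
  fun h ↦ hw (by rw [← exp_arg w, h, exp_pi])

lemma coe_mem_slitPlane {w : Circle} (hw : w ≠ -1) : (w : ℂ) ∈ slitPlane :=
  mem_slitPlane_iff_arg.mpr ⟨arg_ne_pi hw, w.coe_ne_zero⟩

lemma arg_inv_of_ne_neg_one {w : Circle} (hw : w ≠ -1) : arg ↑w⁻¹ = -arg w := by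
  rw [coe_inv, Complex.arg_inv, if_neg (arg_ne_pi hw)]

lemma continuous_arg_comp {X : Type*} [TopologicalSpace X] {w : X → Circle} (hw : Continuous w)
    (hne : ∀ p, w p ≠ -1) : Continuous fun p ↦ arg (w p) :=
  continuous_iff_continuousAt.mpr fun p ↦
    (continuousAt_arg (coe_mem_slitPlane (hne p))).comp (f := fun p ↦ (w p : ℂ))
      (continuous_subtype_val.comp hw).continuousAt

end Circle

section MotionPlanning

variable {V : Set (Circle × Circle)}

theorem exists_isSymmetricMPR_of_lift (θ : V → ℝ) (hθ : Continuous θ)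
    (hend : ∀ p : V, p.1.1 * Circle.exp (θ p) = p.1.2)
    (hodd : ∀ (x y : Circle) (hxy : (x, y) ∈ V) (hyx : (y, x) ∈ V),
      θ ⟨(y, x), hyx⟩ = -θ ⟨(x, y), hxy⟩) :
    ∃ s : V → C(unitInterval, Circle), IsSymmetricMPR V s := by
  let F : C(V × unitInterval, Circle) :=
    ⟨fun q ↦ q.1.1.1 * Circle.exp (q.2 * θ q.1), by fun_prop⟩
  refine ⟨F.curry, F.curry.continuous, fun p ↦ ⟨?_, ?_⟩, fun x y hxy hyx t ↦ ?_⟩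
  · simp [F]
  · simpa [F] using hend p
  · change y * Circle.exp (t * θ ⟨(y, x), hyx⟩) = x * Circle.exp ((σ t : ℝ) * θ ⟨(x, y), hxy⟩)
    rw [hodd x y hxy hyx]
    have hend' : x * Circle.exp (θ ⟨(x, y), hxy⟩) = y := hend ⟨(x, y), hxy⟩
    generalize θ ⟨(x, y), hxy⟩ = a at hend' ⊢
    rw [← hend', mul_assoc, ← Circle.exp_add, coe_symm_eq]
    ring_nf

theorem exists_isSymmetricMPR_ne_neg :
    ∃ s : {p : Circle × Circle | p.1 ≠ -p.2} → C(unitInterval, Circle),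
      IsSymmetricMPR {p : Circle × Circle | p.1 ≠ -p.2} s := by
  have hne : ∀ p : {p : Circle × Circle | p.1 ≠ -p.2}, p.1.2 / p.1.1 ≠ -1 := by
    rintro ⟨⟨x, y⟩, hxy⟩ h
    exact hxy (by rw [div_eq_iff_eq_mul.mp h, neg_one_mul, neg_neg])
  refine exists_isSymmetricMPR_of_lift (fun p ↦ arg ↑(p.1.2 / p.1.1))
    (Circle.continuous_arg_comp (by fun_prop) hne) (fun p ↦ ?_) fun x y hxy _ ↦ ?_
  · rw [Circle.exp_arg, mul_div_cancel]
  · change arg ↑(x / y) = -arg ↑(y / x)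
    rw [← inv_div, Circle.arg_inv_of_ne_neg_one (hne ⟨(x, y), hxy⟩)]

theorem exists_isSymmetricMPR_ne_fun (f : Circle → ℝ) (hf : Continuous f) :
    ∃ s : {p : Circle × Circle | f p.1 ≠ f p.2} → C(unitInterval, Circle),
      IsSymmetricMPR {p : Circle × Circle | f p.1 ≠ f p.2} s := by
  have hne : ∀ p : {p : Circle × Circle | f p.1 ≠ f p.2}, -(p.1.2 / p.1.1) ≠ -1 := by
    rintro ⟨⟨x, y⟩, hxy⟩ h
    exact hxy (by rw [neg_inj, div_eq_one] at h; rw [h])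
  have hd : ∀ p : {p : Circle × Circle | f p.1 ≠ f p.2}, f p.1.1 - f p.1.2 ≠ 0 :=
    fun p ↦ sub_ne_zero.mpr p.2
  refine exists_isSymmetricMPR_of_lift
    (fun p ↦ arg ↑(-(p.1.2 / p.1.1)) + Real.pi * ((f p.1.1 - f p.1.2) / |f p.1.1 - f p.1.2|))
    ((Circle.continuous_arg_comp (by fun_prop) hne).add
      (continuous_const.mul ((by fun_prop : Continuous _).div (by fun_prop)
        fun p ↦ abs_ne_zero.mpr (hd p))))
    (fun p ↦ ?_) fun x y hxy _ ↦ ?_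
  · rw [Circle.exp_add, Circle.exp_arg, Circle.exp_pi_mul_div_abs (hd p), neg_mul_neg, mul_one,
      mul_div_cancel]
  · change arg ↑(-(x / y)) + Real.pi * ((f y - f x) / |f y - f x|)
      = -(arg ↑(-(y / x)) + Real.pi * ((f x - f y) / |f x - f y|))
    rw [← inv_div, ← inv_neg, Circle.arg_inv_of_ne_neg_one (hne ⟨(x, y), hxy⟩), ← neg_sub (f x),
      abs_neg, neg_div]
    ring

end MotionPlanning

lemma Circle.ne_neg_or_re_ne_or_im_ne (x y : Circle) :
    x ≠ -y ∨ (x : ℂ).re ≠ (y : ℂ).re ∨ (x : ℂ).im ≠ (y : ℂ).im := by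
  by_contra! h
  obtain ⟨hneg, hre, him⟩ := h
  have hxy : x = y := Circle.ext (Complex.ext hre him)
  exact Circle.neg_ne_self y (hxy ▸ hneg).symm

/-- There exist three symmetric open subsets of `S¹ × S¹` which cover `S¹ × S¹` and
each of which admits a symmetric motion planning rule. -/
theorem cover_by_three_symmetric_mpr_sets :
    ∃ V₁ V₂ V₃ : Set (Circle × Circle),
      V₁ ∪ V₂ ∪ V₃ = Set.univ ∧
      (IsOpen V₁ ∧ IsSymmetricSet V₁ ∧
        ∃ s : V₁ → C(unitInterval, Circle), IsSymmetricMPR V₁ s) ∧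
      (IsOpen V₂ ∧ IsSymmetricSet V₂ ∧
        ∃ s : V₂ → C(unitInterval, Circle), IsSymmetricMPR V₂ s) ∧
      (IsOpen V₃ ∧ IsSymmetricSet V₃ ∧
        ∃ s : V₃ → C(unitInterval, Circle), IsSymmetricMPR V₃ s) := by
  refine ⟨{p | p.1 ≠ -p.2}, {p | (p.1 : ℂ).re ≠ (p.2 : ℂ).re}, {p | (p.1 : ℂ).im ≠ (p.2 : ℂ).im},
    ?_, ⟨isOpen_ne_fun (by fun_prop) (by fun_prop),
      fun _ _ h h' ↦ h (neg_eq_iff_eq_neg.mp h'.symm), exists_isSymmetricMPR_ne_neg⟩,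
    ⟨isOpen_ne_fun (by fun_prop) (by fun_prop), fun _ _ ↦ Ne.symm,
      exists_isSymmetricMPR_ne_fun (fun z ↦ (z : ℂ).re) (by fun_prop)⟩,
    ⟨isOpen_ne_fun (by fun_prop) (by fun_prop), fun _ _ ↦ Ne.symm,
      exists_isSymmetricMPR_ne_fun (fun z ↦ (z : ℂ).im) (by fun_prop)⟩⟩
  ext ⟨x, y⟩
  simpa [or_assoc] using Circle.ne_neg_or_re_ne_or_im_ne x y
end

section
/- If V ⊆ S¹×S¹ is a symmetric open set and s : V → PS¹ is a symmetric motion planning rule, then there is a continuous function d : ρ⁻¹(V) → ℤ such that for all points of its domain: d(t,1) − d(t,0) = −1, d(1,t) − d(0,t) = 1, and d(t',t) = −d(t,t'). -/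
/-
Lift the path `s(ρ(t, t'))` through the covering `Circle.exp : ℝ → S¹`; its total angle `θ`
satisfies `2πt + θ ∈ 2πt' + 2πℤ`, so `d(t, t') := t - t' + θ / 2π` is an integer. By the homotopy
lifting property, `θ` depends continuously on the path, hence `d` is continuous. The two boundary
identities hold because `ρ(t, 0) = ρ(t, 1)` and `ρ(0, t) = ρ(1, t)`, and antisymmetry because
reversing a path negates its total angle.
-/

open unitInterval Real

/-- The quotient map `ρ : I × I → S¹ × S¹`, `ρ(t, t´) = (e^{2πit}, e^{2πit´})`. -/
noncomputable def rho (p : unitInterval × unitInterval) : Circle × Circle :=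
  (Circle.exp (2 * π * p.1), Circle.exp (2 * π * p.2))

namespace Circle

/-- Lifts `r ↦ γ r / γ 0` through `exp` from `0`. Rotating every path to start at `1` makes the
starting lift constant, so the homotopy lifting property applies to the family of all paths. -/
noncomputable def pathLiftHomotopy : C(I × C(I, Circle), ℝ) :=
  isCoveringMap_exp.liftHomotopy ⟨fun x => x.2 x.1 / x.2 0, by fun_prop⟩ 0 fun γ => by simp

noncomputable def windingAngle (γ : C(I, Circle)) : ℝ := pathLiftHomotopy (1, γ)

@[fun_prop]
theorem continuous_windingAngle : Continuous windingAngle :=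
  pathLiftHomotopy.continuous.comp (by fun_prop)

theorem exp_pathLiftHomotopy (r : I) (γ : C(I, Circle)) :
    exp (pathLiftHomotopy (r, γ)) = γ r / γ 0 :=
  congrFun (isCoveringMap_exp.liftHomotopy_lifts _ _ _) (r, γ)

theorem pathLiftHomotopy_zero (γ : C(I, Circle)) : pathLiftHomotopy (0, γ) = 0 :=
  isCoveringMap_exp.liftHomotopy_zero _ _ _ γ

theorem windingAngle_eq_sub_of_lift {γ : C(I, Circle)} {Γ : I → ℝ} (hΓ : Continuous Γ)
    (hlift : ∀ r, exp (Γ r) = γ r) : windingAngle γ = Γ 1 - Γ 0 := by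
  have hlifts : exp ∘ (fun r => pathLiftHomotopy (r, γ)) = exp ∘ (fun r => Γ r - Γ 0) := by
    funext r
    simp only [Function.comp_apply, exp_pathLiftHomotopy, exp_sub, hlift]
  have := isCoveringMap_exp.eq_of_comp_eq (by fun_prop) (by fun_prop) hlifts 0
    (by simp [pathLiftHomotopy_zero])
  exact congrFun this 1

theorem exists_lift (γ : C(I, Circle)) : ∃ Γ : C(I, ℝ), ∀ r, exp (Γ r) = γ r := by
  obtain ⟨Γ, hΓ, -⟩ := isCoveringMap_exp.exists_path_lifts γ _ (exp_arg (γ 0)).symm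
  exact ⟨Γ, congrFun hΓ⟩

theorem exp_windingAngle (γ : C(I, Circle)) : exp (windingAngle γ) = γ 1 / γ 0 := by
  obtain ⟨Γ, hΓ⟩ := exists_lift γ
  rw [windingAngle_eq_sub_of_lift Γ.continuous hΓ, exp_sub, hΓ, hΓ]

theorem windingAngle_comp_symm (γ : C(I, Circle)) :
    windingAngle (γ.comp ⟨σ, continuous_symm⟩) = -windingAngle γ := by
  obtain ⟨Γ, hΓ⟩ := exists_lift γ
  rw [windingAngle_eq_sub_of_lift (γ := γ.comp ⟨σ, continuous_symm⟩)
      (Γ.continuous.comp continuous_symm) fun r => hΓ (σ r),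
    windingAngle_eq_sub_of_lift Γ.continuous hΓ]
  simp

theorem exists_int_sub_add_windingAngle_div {γ : C(I, Circle)} {t t' : ℝ}
    (h0 : γ 0 = exp (2 * π * t)) (h1 : γ 1 = exp (2 * π * t')) :
    ∃ m : ℤ, t - t' + windingAngle γ / (2 * π) = m := by
  have hexp : exp (2 * π * t + windingAngle γ) = exp (2 * π * t') := by
    rw [exp_add, exp_windingAngle, ← h0, ← h1, mul_div_cancel]
  obtain ⟨m, hm⟩ := exp_eq_exp.mp hexp
  refine ⟨m, ?_⟩
  field_simp
  linarith

end Circle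

theorem exists_continuous_int_eq {X : Type*} [TopologicalSpace X] {g : X → ℝ} (hg : Continuous g)
    (hint : ∀ x, ∃ m : ℤ, g x = m) : ∃ d : X → ℤ, Continuous d ∧ ∀ x, (d x : ℝ) = g x := by
  choose d hd using hint
  refine ⟨d, ?_, fun x => (hd x).symm⟩
  rw [Int.isClosedEmbedding_coe_real.isEmbedding.continuous_iff]
  simpa only [Function.comp_def, ← hd] using hg

theorem continuous_rho : Continuous rho := by
  unfold rho; fun_prop

theorem rho_mk_one_right (t : I) : rho (t, 1) = rho (t, 0) := by simp [rho]

theorem rho_mk_one_left (t : I) : rho (1, t) = rho (0, t) := by simp [rho]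

theorem exists_d_function_general (V : Set (Circle × Circle)) (s : V → C(unitInterval, Circle))
    (hs : IsSymmetricMPR V s) :
    ∃ d : (rho ⁻¹' V) → ℤ,
      Continuous d ∧
      (∀ (t : unitInterval) (h0 : (t, (0 : unitInterval)) ∈ rho ⁻¹' V)
        (h1 : (t, (1 : unitInterval)) ∈ rho ⁻¹' V),
        d ⟨(t, 1), h1⟩ - d ⟨(t, 0), h0⟩ = -1) ∧
      (∀ (t : unitInterval) (h0 : ((0 : unitInterval), t) ∈ rho ⁻¹' V)
        (h1 : ((1 : unitInterval), t) ∈ rho ⁻¹' V),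
        d ⟨(1, t), h1⟩ - d ⟨(0, t), h0⟩ = 1) ∧
      (∀ (t t' : unitInterval) (h : (t, t') ∈ rho ⁻¹' V) (h' : (t', t) ∈ rho ⁻¹' V),
        d ⟨(t', t), h'⟩ = - d ⟨(t, t'), h⟩) := by
  obtain ⟨hs_cont, hs_ends, hs_symm⟩ := hs
  let γ : rho ⁻¹' V → C(I, Circle) := fun p => s ⟨rho p, p.2⟩
  have hγ : Continuous γ :=
    hs_cont.comp ((continuous_rho.comp continuous_subtype_val).subtype_mk _)
  let g : rho ⁻¹' V → ℝ := fun p => p.1.1 - p.1.2 + Circle.windingAngle (γ p) / (2 * π)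
  have hg_int (p : rho ⁻¹' V) : ∃ m : ℤ, g p = m :=
    Circle.exists_int_sub_add_windingAngle_div (hs_ends _).1 (hs_ends _).2
  obtain ⟨d, hd_cont, hd⟩ := exists_continuous_int_eq (by fun_prop) hg_int
  refine ⟨d, hd_cont, fun t h0 h1 => ?_, fun t h0 h1 => ?_, fun t t' h h' => ?_⟩
  · have hγ_eq : γ ⟨(t, 1), h1⟩ = γ ⟨(t, 0), h0⟩ := by
      simp only [γ]; congr 2; exact rho_mk_one_right t
    have : (d ⟨(t, 1), h1⟩ : ℝ) - d ⟨(t, 0), h0⟩ = -1 := by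
      simp only [hd, g, hγ_eq]; simp
    exact_mod_cast this
  · have hγ_eq : γ ⟨(1, t), h1⟩ = γ ⟨(0, t), h0⟩ := by
      simp only [γ]; congr 2; exact rho_mk_one_left t
    have : (d ⟨(1, t), h1⟩ : ℝ) - d ⟨(0, t), h0⟩ = 1 := by
      simp only [hd, g, hγ_eq]; simp
    exact_mod_cast this
  · have hγ_eq : γ ⟨(t', t), h'⟩ = (γ ⟨(t, t'), h⟩).comp ⟨σ, continuous_symm⟩ :=
      ContinuousMap.ext (hs_symm _ _ h h')
    have : (d ⟨(t', t), h'⟩ : ℝ) = -d ⟨(t, t'), h⟩ := by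
      simp only [hd, g, hγ_eq, Circle.windingAngle_comp_symm]; ring
    exact_mod_cast this

/-- To a symmetric motion planning rule on a symmetric open set `V ⊆ S¹ × S¹` one can
associate a continuous (locally constant) function `d : ρ⁻¹(V) → ℤ` with
`d(t,1) - d(t,0) = -1`, `d(1,t) - d(0,t) = 1`, and `d(t',t) = -d(t,t')`. -/
theorem exists_d_function (V : Set (Circle × Circle)) (hVopen : IsOpen V)
    (hVsym : IsSymmetricSet V) (s : V → C(unitInterval, Circle))
    (hs : IsSymmetricMPR V s) :
    ∃ d : (rho ⁻¹' V) → ℤ,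
      Continuous d ∧
      (∀ (t : unitInterval) (h0 : (t, (0 : unitInterval)) ∈ rho ⁻¹' V)
        (h1 : (t, (1 : unitInterval)) ∈ rho ⁻¹' V),
        d ⟨(t, 1), h1⟩ - d ⟨(t, 0), h0⟩ = -1) ∧
      (∀ (t : unitInterval) (h0 : ((0 : unitInterval), t) ∈ rho ⁻¹' V)
        (h1 : ((1 : unitInterval), t) ∈ rho ⁻¹' V),
        d ⟨(1, t), h1⟩ - d ⟨(0, t), h0⟩ = 1) ∧
      (∀ (t t' : unitInterval) (h : (t, t') ∈ rho ⁻¹' V) (h' : (t', t) ∈ rho ⁻¹' V),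
        d ⟨(t', t), h'⟩ = - d ⟨(t, t'), h⟩) :=
  exists_d_function_general V s hs
end

section
/- If W is a connected bounded open subset of the plane ℝ², and K is the unbounded connected component of ℝ² − W, then the boundary ∂K of K is connected. -/
/-!
Since the component `K` is closed, `∂K = K ∩ closure Kᶜ` and `K ∪ closure Kᶜ` is the whole plane.
The complement `Kᶜ` is connected, being `W` together with the other components of `Wᶜ`, each of
which touches `closure W`. Hence `∂K` is connected because the plane, like every simply connected
space, is unicoherent: if `P ∩ Q` split into closed pieces `A` and `B`, an Urysohn function `φ`
separating them would give a circle-valued map, `exp (iπφ)` on `P` and `exp (-iπφ)` on `Q`, whose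
real lift increases by `π` from `A` to `B` along `P` but by `-π` along `Q`.
-/

open Set Real

section Components

variable {X : Type*} [TopologicalSpace X]

theorem IsClosed.connectedComponentIn {F : Set X} (hF : IsClosed F) (x : X) :
    IsClosed (connectedComponentIn F x) := by
  by_cases hx : x ∈ F
  · refine isClosed_of_closure_subset <| isPreconnected_connectedComponentIn.closure
      |>.subset_connectedComponentIn (subset_closure (mem_connectedComponentIn hx)) ?_
    exact hF.closure_subset_iff.mpr (connectedComponentIn_subset F x)
  · simp [connectedComponentIn_eq_empty hx]

theorem frontier_connectedComponentIn_subset [LocallyConnectedSpace X] {F : Set X}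
    (hF : IsClosed F) (x : X) : frontier (connectedComponentIn F x) ⊆ frontier F := by
  intro z hz
  have hzC : z ∈ connectedComponentIn F x :=
    (hF.connectedComponentIn x).frontier_subset hz
  refine ⟨subset_closure (connectedComponentIn_subset F x hzC), fun hzF => hz.2 ?_⟩
  rw [connectedComponentIn_eq hzC]
  exact mem_interior_iff_mem_nhds.mpr
    (connectedComponentIn_mem_nhds (mem_interior_iff_mem_nhds.mp hzF))

theorem IsConnected.isPreconnected_union_connectedComponentIn_compl [PreconnectedSpace X]
    [LocallyConnectedSpace X] {W : Set X} (hW : IsConnected W) (hWo : IsOpen W) (y : X) :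
    IsPreconnected (W ∪ connectedComponentIn Wᶜ y) := by
  by_cases hy : y ∈ Wᶜ
  · set C := connectedComponentIn Wᶜ y
    have hCW : C ⊆ Wᶜ := connectedComponentIn_subset Wᶜ y
    obtain ⟨z, hz⟩ : (frontier C).Nonempty := by
      refine nonempty_frontier_iff.mpr ⟨⟨y, mem_connectedComponentIn hy⟩, fun hC => ?_⟩
      obtain ⟨w, hw⟩ := hW.nonempty
      exact hCW (hC ▸ mem_univ w) hw
    have hzC : z ∈ C := (hWo.isClosed_compl.connectedComponentIn y).frontier_subset hz
    have hzW : z ∈ closure W := by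
      have := frontier_connectedComponentIn_subset hWo.isClosed_compl y hz
      exact frontier_subset_closure (frontier_compl W ▸ this)
    have hWz : IsPreconnected (insert z W) :=
      hW.isPreconnected.subset_closure (subset_insert z W)
        (insert_subset hzW subset_closure)
    have := hWz.union z (mem_insert z W) hzC isPreconnected_connectedComponentIn
    rwa [insert_union, ← union_insert, insert_eq_of_mem hzC] at this
  · simpa [connectedComponentIn_eq_empty hy] using hW.isPreconnected

theorem IsConnected.isPreconnected_compl_connectedComponentIn [PreconnectedSpace X]
    [LocallyConnectedSpace X] {W : Set X} (hW : IsConnected W) (hWo : IsOpen W) (x : X) :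
    IsPreconnected (connectedComponentIn Wᶜ x)ᶜ := by
  set K := connectedComponentIn Wᶜ x
  have hWK : W ⊆ Kᶜ := fun w hw hwK => connectedComponentIn_subset Wᶜ x hwK hw
  have hcomp : ∀ y ∉ K, connectedComponentIn Wᶜ y ⊆ Kᶜ := by
    intro y hy p hpy hpK
    have hyW : y ∈ Wᶜ := connectedComponentIn_nonempty_iff.mp ⟨p, hpy⟩
    refine hy ?_
    rw [show K = _ from connectedComponentIn_eq hpK, ← connectedComponentIn_eq hpy]
    exact mem_connectedComponentIn hyW
  obtain ⟨w, hw⟩ := hW.nonempty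
  refine isPreconnected_of_forall w fun y hy => ⟨W ∪ connectedComponentIn Wᶜ y,
    union_subset hWK (hcomp y hy), Or.inl hw, ?_,
    hW.isPreconnected_union_connectedComponentIn_compl hWo y⟩
  by_cases hyW : y ∈ W
  · exact Or.inl hyW
  · exact Or.inr (mem_connectedComponentIn hyW)

end Components

section Unicoherence

variable {X : Type*} [TopologicalSpace X]

theorem ContinuousMap.exists_circleExp_lift [SimplyConnectedSpace X]
    [LocallyPathConnectedSpace X] (f : C(X, Circle)) :
    ∃ g : C(X, ℝ), ∀ x, Circle.exp (g x) = f x := by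
  obtain ⟨x₀⟩ : Nonempty X := inferInstance
  obtain ⟨g, ⟨-, hg⟩, -⟩ := Circle.isCoveringMap_exp.existsUnique_continuousMap_lifts f x₀
    (Complex.arg (f x₀)) (Circle.exp_arg _)
  exact ⟨g, congrFun hg⟩

theorem IsPreconnected.sub_eq_sub_of_circleExp_eq {S : Set X} (hS : IsPreconnected S)
    {u v : X → ℝ} (hu : ContinuousOn u S) (hv : ContinuousOn v S)
    (huv : ∀ x ∈ S, Circle.exp (u x) = Circle.exp (v x)) {x y : X} (hx : x ∈ S) (hy : y ∈ S) :
    u x - v x = u y - v y := by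
  have hdisc : IsDiscrete (AddSubgroup.zmultiples (2 * π) : Set ℝ) :=
    isDiscrete_iff_discreteTopology.mpr
      (inferInstance : DiscreteTopology (AddSubgroup.zmultiples (2 * π)))
  refine hS.constant_of_mapsTo hdisc (hu.sub hv) (fun z hz => ?_) hx hy
  obtain ⟨m, hm⟩ := Circle.exp_eq_exp.mp (huv z hz)
  exact ⟨m, by simp [hm]⟩

theorem isPreconnected_inter_of_union_eq_univ [NormalSpace X] [SimplyConnectedSpace X]
    [LocallyPathConnectedSpace X] {P Q : Set X} (hPc : IsClosed P) (hQc : IsClosed Q)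
    (hP : IsPreconnected P) (hQ : IsPreconnected Q) (hPQ : P ∪ Q = univ) :
    IsPreconnected (P ∩ Q) := by
  classical
  rw [isPreconnected_closed_iff]
  intro A B hA hB hcover ⟨a, haPQ, haA⟩ ⟨b, hbPQ, hbB⟩
  by_contra hAB
  have hdisj : Disjoint (P ∩ Q ∩ A) (P ∩ Q ∩ B) :=
    Set.disjoint_left.mpr fun x hxA hxB => hAB ⟨x, hxA.1, hxA.2, hxB.2⟩
  obtain ⟨φ, hφA, hφB, -⟩ := exists_continuous_zero_one_of_isClosed
    ((hPc.inter hQc).inter hA) ((hPc.inter hQc).inter hB) hdisj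
  have hφ : ∀ x ∈ P ∩ Q, Circle.exp (π * φ x) = Circle.exp (-(π * φ x)) := by
    intro x hx
    rcases hcover hx with hxA | hxB
    · simp [hφA ⟨hx, hxA⟩]
    · rw [hφB ⟨hx, hxB⟩, Circle.exp_eq_exp]
      exact ⟨1, by simp; ring⟩
  have hfront : frontier P ⊆ P ∩ Q := by
    intro x hx
    refine ⟨hPc.frontier_subset hx, by_contra fun hxQ => hx.2 ?_⟩
    exact interior_mono (fun y hy => (hPQ ▸ mem_univ y : y ∈ P ∪ Q).resolve_right hy)
      (hQc.isOpen_compl.interior_eq.symm ▸ hxQ)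
  let f : C(X, Circle) :=
    ⟨fun x => if x ∈ P then Circle.exp (π * φ x) else Circle.exp (-(π * φ x)),
      Continuous.if (fun x hx => hφ x (hfront hx)) (by fun_prop) (by fun_prop)⟩
  obtain ⟨g, hg⟩ := f.exists_circleExp_lift
  have hgP : ∀ x ∈ P, Circle.exp (g x) = Circle.exp (π * φ x) := fun x hx => by
    rw [hg]
    exact if_pos hx
  have hgQ : ∀ x ∈ Q, Circle.exp (g x) = Circle.exp (-(π * φ x)) := fun x hx => by
    by_cases hxP : x ∈ P
    · rw [hg, ← hφ x ⟨hxP, hx⟩]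
      exact if_pos hxP
    · rw [hg]
      exact if_neg hxP
  have h₁ := hP.sub_eq_sub_of_circleExp_eq (by fun_prop) (by fun_prop) hgP haPQ.1 hbPQ.1
  have h₂ := hQ.sub_eq_sub_of_circleExp_eq (by fun_prop) (by fun_prop) hgQ haPQ.2 hbPQ.2
  rw [hφA ⟨haPQ, haA⟩, hφB ⟨hbPQ, hbB⟩] at h₁ h₂
  simp only [Pi.zero_apply, Pi.one_apply] at h₁ h₂
  linarith [pi_pos]

end Unicoherence

theorem IsConnected.isConnected_frontier_connectedComponentIn_compl {X : Type*}
    [TopologicalSpace X] [NormalSpace X] [SimplyConnectedSpace X] [LocallyPathConnectedSpace X]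
    {W : Set X} (hW : IsConnected W) (hWo : IsOpen W) {x : X} (hx : x ∈ Wᶜ) :
    IsConnected (frontier (connectedComponentIn Wᶜ x)) := by
  set K := connectedComponentIn Wᶜ x
  have hKc : IsClosed K := hWo.isClosed_compl.connectedComponentIn x
  have hKW : K ⊆ Wᶜ := connectedComponentIn_subset Wᶜ x
  have hfront : frontier K = K ∩ closure Kᶜ := by
    rw [frontier_eq_closure_inter_closure, hKc.closure_eq]
  refine ⟨nonempty_frontier_iff.mpr ⟨⟨x, mem_connectedComponentIn hx⟩, fun hK => ?_⟩, ?_⟩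
  · obtain ⟨w, hw⟩ := hW.nonempty
    exact hKW (hK ▸ mem_univ w) hw
  · rw [hfront]
    refine isPreconnected_inter_of_union_eq_univ hKc isClosed_closure
      isPreconnected_connectedComponentIn
      (hW.isPreconnected_compl_connectedComponentIn hWo x).closure (eq_univ_of_univ_subset ?_)
    exact (union_compl_self K).symm.subset.trans (union_subset_union_right K subset_closure)

theorem frontier_of_unbounded_component_connected_general (W : Set (ℝ × ℝ))
    (hWconn : IsConnected W) (hWopen : IsOpen W)
    (K : Set (ℝ × ℝ)) (hK : ∃ x ∈ Wᶜ, K = connectedComponentIn Wᶜ x) :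
    IsConnected (frontier K) := by
  obtain ⟨x, hx, rfl⟩ := hK
  exact hWconn.isConnected_frontier_connectedComponentIn_compl hWopen hx

/-- If `W` is a connected bounded open subset of the plane `ℝ²` and `K` is the unbounded
connected component of `ℝ² − W`, then the boundary (frontier) `∂K` is connected. -/
theorem frontier_of_unbounded_component_connected (W : Set (ℝ × ℝ))
    (hWconn : IsConnected W) (hWbdd : Bornology.IsBounded W) (hWopen : IsOpen W)
    (K : Set (ℝ × ℝ)) (hK : ∃ x ∈ Wᶜ, K = connectedComponentIn Wᶜ x)
    (hKunbdd : ¬ Bornology.IsBounded K) :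
    IsConnected (frontier K) :=
  frontier_of_unbounded_component_connected_general W hWconn hWopen K hK
end

section
/- Let X be a locally connected topological space and let V and V' be open subsets with V ∪ V' = X. If C is a connected component of V and C' is a connected component of V', then the boundaries ∂C and ∂C' are disjoint: ∂C ∩ ∂C' = ∅. -/
lemma frontier_ccIn_not_mem {X : Type*} [TopologicalSpace X]
    [LocallyConnectedSpace X] {U : Set X} (hU : IsOpen U) {z : X} {y : X}
    (hy : y ∈ frontier (connectedComponentIn U z)) : y ∉ U := by
  intro hyU
  have hCopen : IsOpen (connectedComponentIn U z) := hU.connectedComponentIn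
  rw [frontier, hCopen.interior_eq] at hy
  have hynot : y ∉ connectedComponentIn U z := hy.2
  have hyopen : IsOpen (connectedComponentIn U y) := hU.connectedComponentIn
  have hymem : y ∈ connectedComponentIn U y := mem_connectedComponentIn hyU
  obtain ⟨t, htC, htY⟩ := mem_closure_iff.mp hy.1 _ hyopen hymem
  have h1 := connectedComponentIn_eq htY
  have h2 := connectedComponentIn_eq htC
  rw [h2, ← h1] at hymem
  exact hynot hymem

/-- In a locally connected space covered by two open sets `V ∪ V' = X`, the boundary of
a connected component of `V` is disjoint from the boundary of a connected component
of `V'`. -/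
theorem frontier_components_disjoint {X : Type*} [TopologicalSpace X]
    [LocallyConnectedSpace X] (V V' : Set X) (hV : IsOpen V) (hV' : IsOpen V')
    (hcover : V ∪ V' = Set.univ)
    (C C' : Set X) (hC : ∃ x ∈ V, C = connectedComponentIn V x)
    (hC' : ∃ x ∈ V', C' = connectedComponentIn V' x) :
    frontier C ∩ frontier C' = ∅ := by
  obtain ⟨x, hx, rfl⟩ := hC
  obtain ⟨x', hx', rfl⟩ := hC'
  ext y
  simp only [Set.mem_inter_iff, Set.mem_empty_iff_false, iff_false]
  rintro ⟨h1, h2⟩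
  have hy1 := frontier_ccIn_not_mem hV h1
  have hy2 := frontier_ccIn_not_mem hV' h2
  have : y ∈ V ∪ V' := hcover ▸ Set.mem_univ y
  cases this <;> tauto
end

section
/- Let V₂ = {(z,z') ∈ S¹×S¹ : Im z ≠ Im z'} be the set of pairs of points of the circle not at the same horizontal level. Then V₂ is a symmetric open subset of S¹×S¹ and admits a symmetric motion planning rule. -/
open unitInterval

/-!
If `Im x < Im y` then `x ≠ i` and `y ≠ -i`, so near such a pair `x` has a continuous angle in
`(-3π/2, π/2]` and `y` one in `(-π/2, 3π/2]`; interpolating linearly between them gives a path from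
`x` to `y` depending continuously on `(x, y)`. For `Im x > Im y` take the reverse of the path from
`y` to `x`. The two regions are open and exchanged by `(x, y) ↦ (y, x)`, so the result is
continuous and symmetric.
-/

section Symmetrize

variable {X : Type*} [TopologicalSpace X]

noncomputable def symmetrize (h : X → ℝ) (γ : X → X → C(I, X)) (p : X × X) : C(I, X) :=
  if h p.1 < h p.2 then γ p.1 p.2 else (γ p.2 p.1).comp (symmHomeomorph : C(I, I))

variable {h : X → ℝ} {γ : X → X → C(I, X)}

theorem continuousAt_symmetrize (hh : Continuous h)
    (hγ : ∀ x y, h x < h y → ContinuousAt (fun p : X × X => γ p.1 p.2) (x, y))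
    {p : X × X} (hp : h p.1 ≠ h p.2) : ContinuousAt (symmetrize h γ) p := by
  rcases hp.lt_or_gt with hlt | hgt
  · have hev : ∀ᶠ q in nhds p, h q.1 < h q.2 :=
      (isOpen_lt (by fun_prop) (by fun_prop)).mem_nhds hlt
    refine (hγ p.1 p.2 hlt).congr (hev.mono fun q hq => ?_)
    simp only [symmetrize, if_pos hq]
  · have hev : ∀ᶠ q in nhds p, h q.2 < h q.1 :=
      (isOpen_lt (by fun_prop) (by fun_prop)).mem_nhds hgt
    have hrev : ContinuousAt (fun q : X × X => (γ q.2 q.1).comp (symmHomeomorph : C(I, I))) p :=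
      (ContinuousMap.continuous_precomp _).continuousAt.comp
        ((hγ p.2 p.1 hgt).comp (f := Prod.swap) continuous_swap.continuousAt)
    refine hrev.congr (hev.mono fun q hq => ?_)
    simp only [symmetrize, if_neg hq.not_gt]

theorem symmetrize_apply_zero (hγ0 : ∀ x y, γ x y 0 = x) (hγ1 : ∀ x y, γ x y 1 = y)
    (p : X × X) : symmetrize h γ p 0 = p.1 := by
  unfold symmetrize
  split_ifs <;> simp [hγ0, hγ1]

theorem symmetrize_apply_one (hγ0 : ∀ x y, γ x y 0 = x) (hγ1 : ∀ x y, γ x y 1 = y)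
    (p : X × X) : symmetrize h γ p 1 = p.2 := by
  unfold symmetrize
  split_ifs <;> simp [hγ0, hγ1]

theorem symmetrize_swap_apply {x y : X} (hxy : h x ≠ h y) (t : I) :
    symmetrize h γ (y, x) t = symmetrize h γ (x, y) (σ t) := by
  rcases hxy.lt_or_gt with hlt | hgt
  · simp [symmetrize, hlt, hlt.not_gt]
  · simp [symmetrize, hgt, hgt.not_gt]

end Symmetrize

theorem exists_isSymmetricMPR_of_lt {h : Circle → ℝ} (hh : Continuous h)
    (γ : Circle → Circle → C(I, Circle))
    (hγ : ∀ x y, h x < h y → ContinuousAt (fun p : Circle × Circle => γ p.1 p.2) (x, y))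
    (hγ0 : ∀ x y, γ x y 0 = x) (hγ1 : ∀ x y, γ x y 1 = y) :
    ∃ s, IsSymmetricMPR {p : Circle × Circle | h p.1 ≠ h p.2} s := by
  refine ⟨fun p => symmetrize h γ p, ?_, fun p => ?_, fun x y hxy _ t => ?_⟩
  · exact continuous_iff_continuousAt.2 fun p =>
      (continuousAt_symmetrize hh hγ p.2).comp continuous_subtype_val.continuousAt
  · exact ⟨symmetrize_apply_zero hγ0 hγ1 p, symmetrize_apply_one hγ0 hγ1 p⟩
  · exact symmetrize_swap_apply hxy t

namespace Circle

open Real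

/-- The branch of the argument with values in `(θ - π, θ + π]`. -/
noncomputable def argFrom (θ : ℝ) (z : Circle) : ℝ :=
  Complex.arg (exp (-θ) * z : Circle) + θ

theorem exp_argFrom (θ : ℝ) (z : Circle) : exp (argFrom θ z) = z := by
  rw [argFrom, exp_add, exp_arg, exp_neg, mul_comm, mul_inv_cancel_left]

theorem coe_mem_slitPlane_s10 {z : Circle} (hz : z ≠ -1) : (z : ℂ) ∈ Complex.slitPlane := by
  refine Complex.mem_slitPlane_iff_arg.2 ⟨fun h => hz (arg_eq_arg.1 ?_), z.coe_ne_zero⟩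
  simpa using h

theorem continuousAt_argFrom {θ : ℝ} {z : Circle} (hz : z ≠ -exp θ) :
    ContinuousAt (argFrom θ) z := by
  have hz' : exp (-θ) * z ≠ -1 := by
    rwa [exp_neg, Ne, inv_mul_eq_iff_eq_mul, mul_neg_one]
  have harg : ContinuousAt (fun w : Circle => Complex.arg (exp (-θ) * w : Circle)) z :=
    (Complex.continuousAt_arg (coe_mem_slitPlane_s10 hz')).comp
      (f := fun w : Circle => ((exp (-θ) * w : Circle) : ℂ)) (by fun_prop)
  exact harg.add continuousAt_const

noncomputable def expLerp : C(ℝ × ℝ, C(I, Circle)) :=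
  ContinuousMap.curry ⟨fun q : (ℝ × ℝ) × I => exp ((1 - q.2) * q.1.1 + q.2 * q.1.2), by fun_prop⟩

noncomputable def lerpPath (x y : Circle) : C(I, Circle) :=
  expLerp (argFrom (-(π / 2)) x, argFrom (π / 2) y)

theorem lerpPath_apply_zero (x y : Circle) : lerpPath x y 0 = x := by
  simp [lerpPath, expLerp, exp_argFrom]

theorem lerpPath_apply_one (x y : Circle) : lerpPath x y 1 = y := by
  simp [lerpPath, expLerp, exp_argFrom]

theorem abs_im_le_one (z : Circle) : |(z : ℂ).im| ≤ 1 :=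
  (Complex.abs_im_le_norm z).trans_eq z.norm_coe

theorem continuousAt_lerpPath {x y : Circle} (hxy : (x : ℂ).im < (y : ℂ).im) :
    ContinuousAt (fun p : Circle × Circle => lerpPath p.1 p.2) (x, y) := by
  have hx : x ≠ -exp (-(π / 2)) := by
    refine ne_of_apply_ne (fun z : Circle => (z : ℂ).im) (ne_of_lt ?_)
    simp only [coe_neg, coe_exp, Complex.neg_im, Complex.exp_ofReal_mul_I_im, sin_neg,
      sin_pi_div_two, neg_neg]
    linarith [(abs_le.1 (abs_im_le_one y)).2]
  have hy : y ≠ -exp (π / 2) := by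
    refine ne_of_apply_ne (fun z : Circle => (z : ℂ).im) (ne_of_gt ?_)
    simp only [coe_neg, coe_exp, Complex.neg_im, Complex.exp_ofReal_mul_I_im, sin_pi_div_two]
    linarith [(abs_le.1 (abs_im_le_one x)).1]
  exact expLerp.continuous.continuousAt.comp
    ((continuousAt_argFrom hx).prodMap (continuousAt_argFrom hy))

end Circle

/-- The set `V₂` of pairs of points of the circle not at the same horizontal level
(distinct imaginary parts) is symmetric and open, and admits a symmetric motion
planning rule. -/
theorem distinct_im_symmetric_mpr :
    IsOpen {p : Circle × Circle | (p.1 : ℂ).im ≠ (p.2 : ℂ).im} ∧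
    IsSymmetricSet {p : Circle × Circle | (p.1 : ℂ).im ≠ (p.2 : ℂ).im} ∧
    ∃ s : {p : Circle × Circle | (p.1 : ℂ).im ≠ (p.2 : ℂ).im} → C(unitInterval, Circle),
      IsSymmetricMPR {p : Circle × Circle | (p.1 : ℂ).im ≠ (p.2 : ℂ).im} s :=
  ⟨isOpen_ne_fun (by fun_prop) (by fun_prop), fun _ _ => Ne.symm,
    exists_isSymmetricMPR_of_lt (h := fun z : Circle => (z : ℂ).im) (by fun_prop)
      Circle.lerpPath (fun _ _ => Circle.continuousAt_lerpPath) Circle.lerpPath_apply_zero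
      Circle.lerpPath_apply_one⟩
end

section
/- Let V₃ = {(z,z') ∈ S¹×S¹ : Re z ≠ Re z'} be the set of pairs of points of the circle not at the same vertical level. Then V₃ is a symmetric open subset of S¹×S¹ and admits a symmetric motion planning rule. -/
open unitInterval

/-!
Writing `y = x · exp(iφ)`, the path `t ↦ x · exp(itφ)` runs from `x` to `y`, and it is symmetric
as soon as the angle `φ(x, y)` is odd under swapping `x` and `y` and depends continuously on
`(x, y)`. On `V₃` such an angle exists: go counterclockwise from `x` when `Re x < Re y` and
clockwise otherwise. The boundary `Re x = Re y` between the two cases lies outside `V₃`, and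
on `V₃` we have `x ≠ y`, where the counterclockwise angle in `(0, 2π)` is continuous.
-/

open Real

theorem exists_isSymmetricMPR_of_angle {V : Set (Circle × Circle)} {φ : Circle × Circle → ℝ}
    (hφ : ContinuousOn φ V) (hexp : ∀ p ∈ V, Circle.exp (φ p) = p.1⁻¹ * p.2)
    (hswap : ∀ x y, (x, y) ∈ V → φ (y, x) = -φ (x, y)) :
    ∃ s : V → C(I, Circle), IsSymmetricMPR V s := by
  let path : C(V × I, Circle) :=
    ⟨fun q => q.1.1.1 * Circle.exp (q.2 * φ q.1), by
      have hφ' : Continuous fun q : V × I => φ q.1 := hφ.domRestrict.comp continuous_fst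
      exact continuous_fst.subtype_val.fst.mul
        (Circle.exp.continuous.comp (continuous_snd.subtype_val.mul hφ'))⟩
  refine ⟨path.curry, path.curry.continuous, fun p => ⟨?_, ?_⟩, fun x y hxy _ t => ?_⟩
  · simp [path]
  · simp [path, hexp p p.2]
  · simp only [ContinuousMap.curry_apply, ContinuousMap.coe_mk, path, coe_symm_eq,
      hswap x y hxy, hexp _ hxy, sub_mul, one_mul, Circle.exp_sub, mul_neg, Circle.exp_neg]
    rw [div_eq_mul_inv, mul_assoc, mul_inv_cancel_left]

namespace Circle

/-- The argument of `w` taken in `(0, 2π]`; unlike `Complex.arg`, it jumps only at `w = 1`. -/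
noncomputable def posArg (w : Circle) : ℝ := π + Complex.arg (-(w : ℂ))

theorem exp_posArg (w : Circle) : exp (posArg w) = w := by
  have h := Complex.norm_mul_exp_arg_mul_I (-(w : ℂ))
  rw [norm_neg, norm_coe, Complex.ofReal_one, one_mul] at h
  ext
  rw [posArg, coe_exp, Complex.ofReal_add, add_mul, Complex.exp_add, Complex.exp_pi_mul_I, h]
  ring

open scoped ComplexOrder in
theorem neg_coe_mem_slitPlane {w : Circle} (hw : w ≠ 1) : -(w : ℂ) ∈ Complex.slitPlane := by
  rw [Complex.mem_slitPlane_iff_not_le_zero, neg_nonpos, ← Complex.arg_eq_zero_iff_zero_le]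
  exact fun h => hw (arg_eq_zero.mp h)

theorem continuousAt_posArg {w : Circle} (hw : w ≠ 1) : ContinuousAt posArg w :=
  continuousAt_const.add <|
    (Complex.continuousAt_arg (neg_coe_mem_slitPlane hw)).comp (f := fun w : Circle => -(w : ℂ))
      (by fun_prop)

end Circle

open Circle

noncomputable def reOrientedAngle (x y : Circle) : ℝ :=
  if (x : ℂ).re < (y : ℂ).re then posArg (x⁻¹ * y) else -posArg (y⁻¹ * x)

theorem exp_reOrientedAngle (x y : Circle) : Circle.exp (reOrientedAngle x y) = x⁻¹ * y := by
  unfold reOrientedAngle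
  split_ifs
  · exact exp_posArg _
  · rw [Circle.exp_neg, exp_posArg, mul_inv_rev, inv_inv]

theorem reOrientedAngle_swap {x y : Circle} (h : (x : ℂ).re ≠ (y : ℂ).re) :
    reOrientedAngle y x = -reOrientedAngle x y := by
  rcases h.lt_or_gt with h | h <;> simp [reOrientedAngle, h, h.not_gt]

theorem continuousOn_posArg_inv_mul :
    ContinuousOn (fun p : Circle × Circle => posArg (p.1⁻¹ * p.2)) {p | p.1 ≠ p.2} :=
  fun p hp => ((continuousAt_posArg (mt inv_mul_eq_one.mp hp)).comp
    (f := fun p : Circle × Circle => p.1⁻¹ * p.2) (by fun_prop)).continuousWithinAt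

theorem continuousOn_reOrientedAngle :
    ContinuousOn (fun p : Circle × Circle => reOrientedAngle p.1 p.2)
      {p | (p.1 : ℂ).re ≠ (p.2 : ℂ).re} := by
  have hne : {p : Circle × Circle | (p.1 : ℂ).re ≠ (p.2 : ℂ).re} ⊆ {p | p.1 ≠ p.2} :=
    fun p hp heq => hp (by rw [heq])
  refine ContinuousOn.if ?_ ?_ ?_
  · rintro p ⟨hp, hfr⟩
    exact absurd (frontier_lt_subset_eq (by fun_prop) (by fun_prop) hfr) hp
  · exact continuousOn_posArg_inv_mul.mono (Set.inter_subset_left.trans hne)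
  · have hcw := continuousOn_posArg_inv_mul.comp continuous_swap.continuousOn
      (fun p hp => Ne.symm hp)
    exact hcw.neg.mono (Set.inter_subset_left.trans hne)

/-- The set `V₃` of pairs of points of the circle not at the same vertical level
(distinct real parts) is symmetric and open, and admits a symmetric motion
planning rule. -/
theorem distinct_re_symmetric_mpr :
    IsOpen {p : Circle × Circle | (p.1 : ℂ).re ≠ (p.2 : ℂ).re} ∧
    IsSymmetricSet {p : Circle × Circle | (p.1 : ℂ).re ≠ (p.2 : ℂ).re} ∧
    ∃ s : {p : Circle × Circle | (p.1 : ℂ).re ≠ (p.2 : ℂ).re} → C(unitInterval, Circle),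
      IsSymmetricMPR {p : Circle × Circle | (p.1 : ℂ).re ≠ (p.2 : ℂ).re} s :=
  ⟨isOpen_ne_fun (by fun_prop) (by fun_prop), fun _ _ h => Ne.symm h,
    exists_isSymmetricMPR_of_angle continuousOn_reOrientedAngle
      (fun p _ => exp_reOrientedAngle p.1 p.2) (fun _ _ h => reOrientedAngle_swap h)⟩
end
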